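/- Partial switch structure of the low-complexity suboptimal policy in the nonuniform case (Theorem 4, part 2, of the paper): in the nonuniform-channel setting, suppose V : 𝒬 → ℝ is separable with ⊵-monotone components, i.e., V(Q) = Σ_m V_m(Q m) where each V_m : (Fin K → ℕ) → ℝ satisfies q² ⊵ q¹ implies V_m(q²) ≥ V_m(q¹). If J_V(Q, u) ≤ J_V(Q, v) for all v ∈ Fin M, and k ∈ Fin K is such that Q u k < N u k and Q + E_{u,k} ⊵ Q, then J_V(Q + E_{u,k}, u) ≤ J_V(Q + E_{u,k}, v) for all v ∈ Fin M. -/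

import Mathlib

/-!
Adding a request at `(u, k)` raises the queue-length part of every stage cost by one.
Serving `u` changes nothing else: `Q + E_{u,k} ⊵ Q` forces a pending request of content `u`
at some user `j ≥ k`, whose power level `p u j ≥ p u k` already dominates the power cost, and
the next state is the same because the queue of `u` is cleared. Serving any `v ≠ u` leaves the
power cost of `v` unchanged, while the next states only grow in `⊵` (the update `Q ↦ Q'` is
`⊵`-monotone), so the expected future cost can only grow. Hence
`J(Q + E, u) = J(Q, u) + 1 ≤ J(Q, v) + 1 ≤ J(Q + E, v)`.
-/

open Finset

/-- State space of the nonuniform-channel multicast MDP: request queue matrices capped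
by `N`. -/
def QS (M K : ℕ) (N : Fin M → Fin K → ℕ) : Type :=
  {Q : Fin M → Fin K → ℕ // ∀ m k, Q m k ≤ N m k}

/-- Next state when content `u` is multicast in state `Q` and arrival `a` occurs. -/
def nextQ {M K : ℕ} {N : Fin M → Fin K → ℕ} (Q : QS M K N) (u : Fin M)
    (a : Fin M → Fin K → ℕ) : QS M K N :=
  ⟨fun m k => min ((if m = u then 0 else Q.1 m k) + a m k) (N m k),
    fun _ _ => min_le_right _ _⟩

/-- Power cost of multicasting with per-user power levels `pu` to the users with pending
requests in `q`: the maximum of `pu` over `{k : q k > 0}`, and `0` if this set is empty. -/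
noncomputable def PCost {K : ℕ} (pu : Fin K → ℝ) (q : Fin K → ℕ) : ℝ :=
  if h : (Finset.univ.filter fun k => 0 < q k).Nonempty then
    (Finset.univ.filter fun k => 0 < q k).sup' h pu
  else 0

/-- Per-stage cost in the nonuniform case. -/
noncomputable def gCost {M K : ℕ} {N : Fin M → Fin K → ℕ} (wp wf : ℝ)
    (p : Fin M → Fin K → ℝ) (f : Fin M → ℝ) (Q : QS M K N) (u : Fin M) : ℝ :=
  (∑ m, ∑ k, (Q.1 m k : ℝ)) + wp * PCost (p u) (Q.1 u) + wf * f u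

/-- State-action cost function `J_V(Q,u)` in the nonuniform case. -/
noncomputable def JCost {M K : ℕ} {N : Fin M → Fin K → ℕ}
    (𝒜 : Finset (Fin M → Fin K → ℕ)) (ρ : (Fin M → Fin K → ℕ) → ℝ)
    (wp wf : ℝ) (p : Fin M → Fin K → ℝ) (f : Fin M → ℝ)
    (V : QS M K N → ℝ) (Q : QS M K N) (u : Fin M) : ℝ :=
  gCost wp wf p f Q u + ∑ a ∈ 𝒜, ρ a * V (nextQ Q u a)

/-- The partial order `q² ⊵ q¹` on per-content request queue vectors. -/
def TriVec {K : ℕ} (q₂ q₁ : Fin K → ℕ) : Prop :=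
  ∀ k : Fin K,
    ((∃ j, k ≤ j ∧ 0 < q₁ j) → q₁ k ≤ q₂ k) ∧
    ((¬ ∃ j, k ≤ j ∧ 0 < q₁ j) → q₂ k = q₁ k)

/-- The partial order `Q² ⊵ Q¹` on states: `Q² m ⊵ Q¹ m` for every content `m`. -/
def TriState {M K : ℕ} {N : Fin M → Fin K → ℕ} (Q₂ Q₁ : QS M K N) : Prop :=
  ∀ m, TriVec (Q₂.1 m) (Q₁.1 m)

/-- The state `Q + E_{u,k}`: entry `(u,k)` is increased by 1 (requires `Q u k < N u k`). -/
def addE {M K : ℕ} {N : Fin M → Fin K → ℕ} (Q : QS M K N) (u : Fin M) (k : Fin K)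
    (h : Q.1 u k < N u k) : QS M K N :=
  ⟨Function.update Q.1 u (Function.update (Q.1 u) k (Q.1 u k + 1)), by
    intro m i
    rcases eq_or_ne m u with rfl | hm
    · simp only [Function.update_self]
      rcases eq_or_ne i k with rfl | hi
      · simp only [Function.update_self]; exact h
      · simp only [Function.update_of_ne hi]; exact Q.2 m i
    · simp only [Function.update_of_ne hm]; exact Q.2 m i⟩

open Function

theorem sum_update_add {ι M : Type*} [Fintype ι] [DecidableEq ι] [AddCommMonoid M]
    (f : ι → M) (i : ι) (c : M) : ∑ x, update f i (f i + c) x = ∑ x, f x + c := by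
  rw [sum_update_of_mem (mem_univ i), sdiff_singleton_eq_erase,
    ← add_sum_erase univ f (mem_univ i), add_right_comm]

namespace TriVec

variable {K : ℕ}

theorem refl (q : Fin K → ℕ) : TriVec q q :=
  fun _ => ⟨fun _ => le_rfl, fun _ => rfl⟩

theorem le {q₁ q₂ : Fin K → ℕ} (h : TriVec q₂ q₁) (i : Fin K) : q₁ i ≤ q₂ i := by
  by_cases hi : ∃ j, i ≤ j ∧ 0 < q₁ j
  · exact (h i).1 hi
  · exact ((h i).2 hi).ge

theorem min_add {q₁ q₂ a n : Fin K → ℕ} (hq₁ : ∀ i, q₁ i ≤ n i) (h : TriVec q₂ q₁) :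
    TriVec (fun i => min (q₂ i + a i) (n i)) (fun i => min (q₁ i + a i) (n i)) := by
  intro i
  refine ⟨fun _ => min_le_min_right _ (Nat.add_le_add_right (h.le i) _), fun hi => ?_⟩
  have hq₁i : ¬ ∃ j, i ≤ j ∧ 0 < q₁ j := by
    rintro ⟨j, hij, hj⟩
    exact hi ⟨j, hij, lt_min (by omega) (hj.trans_le (hq₁ j))⟩
  simp only [(h i).2 hq₁i]

end TriVec

theorem PCost_update_succ {K : ℕ} {pu : Fin K → ℝ} (hpu : Monotone pu) {q : Fin K → ℕ}
    {k j : Fin K} (hkj : k ≤ j) (hj : 0 < q j) :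
    PCost pu (update q k (q k + 1)) = PCost pu q := by
  have hsupp : univ.filter (fun i => 0 < update q k (q k + 1) i) =
      insert k (univ.filter fun i => 0 < q i) := by
    ext i
    rcases eq_or_ne i k with rfl | hik <;> simp [*]
  have hj_mem : j ∈ univ.filter fun i => 0 < q i := by simp [hj]
  have hne : (univ.filter fun i => 0 < q i).Nonempty := ⟨j, hj_mem⟩
  simp only [PCost, hsupp, insert_nonempty, dif_pos, hne, sup'_insert]
  exact sup_eq_right.mpr ((hpu hkj).trans (le_sup' pu hj_mem))

section State

variable {M K : ℕ} {N : Fin M → Fin K → ℕ}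

theorem addE_apply_self (Q : QS M K N) (u : Fin M) (k : Fin K) (h : Q.1 u k < N u k) :
    (addE Q u k h).1 u = update (Q.1 u) k (Q.1 u k + 1) :=
  update_self ..

theorem addE_apply_of_ne (Q : QS M K N) {u m : Fin M} (k : Fin K) (h : Q.1 u k < N u k)
    (hm : m ≠ u) : (addE Q u k h).1 m = Q.1 m :=
  update_of_ne hm ..

theorem exists_pos_of_triState_addE {Q : QS M K N} {u : Fin M} {k : Fin K}
    {h : Q.1 u k < N u k} (hT : TriState (addE Q u k h) Q) : ∃ j, k ≤ j ∧ 0 < Q.1 u j := by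
  by_contra hne
  simpa [addE_apply_self] using (hT u k).2 hne

theorem sum_sum_addE (Q : QS M K N) (u : Fin M) (k : Fin K) (h : Q.1 u k < N u k) :
    ∑ m, ∑ i, (addE Q u k h).1 m i = ∑ m, ∑ i, Q.1 m i + 1 := by
  calc ∑ m, ∑ i, (addE Q u k h).1 m i
      = ∑ m, update (fun m => ∑ i, Q.1 m i) u (∑ i, Q.1 u i + 1) m := by
        refine sum_congr rfl fun m _ => ?_
        rcases eq_or_ne m u with rfl | hm
        · rw [update_self, addE_apply_self, sum_update_add]
        · rw [update_of_ne hm, addE_apply_of_ne Q k h hm]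
    _ = ∑ m, ∑ i, Q.1 m i + 1 := sum_update_add _ _ _

theorem nextQ_congr {Q₁ Q₂ : QS M K N} {u : Fin M} (h : ∀ m ≠ u, Q₂.1 m = Q₁.1 m)
    (a : Fin M → Fin K → ℕ) : nextQ Q₂ u a = nextQ Q₁ u a := by
  refine Subtype.ext (funext fun m => funext fun i => ?_)
  simp only [nextQ]
  split_ifs with hm
  · rfl
  · rw [h m hm]

theorem TriState.nextQ {Q₁ Q₂ : QS M K N} (hT : TriState Q₂ Q₁) (v : Fin M)
    (a : Fin M → Fin K → ℕ) : TriState (_root_.nextQ Q₂ v a) (_root_.nextQ Q₁ v a) := by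
  intro m
  by_cases hm : m = v
  · simp only [_root_.nextQ, hm, if_true]
    exact TriVec.refl _
  · simp only [_root_.nextQ, hm, if_false]
    exact (hT m).min_add (Q₁.2 m)

theorem sum_le_sum_of_triState {Vm : Fin M → (Fin K → ℕ) → ℝ}
    (hVm : ∀ m (q₁ q₂ : Fin K → ℕ), TriVec q₂ q₁ → Vm m q₁ ≤ Vm m q₂) (Q₁ Q₂ : QS M K N)
    (hT : TriState Q₂ Q₁) : ∑ m, Vm m (Q₁.1 m) ≤ ∑ m, Vm m (Q₂.1 m) :=
  sum_le_sum fun m _ => hVm m _ _ (hT m)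

variable {wp wf : ℝ} {p : Fin M → Fin K → ℝ} {f : Fin M → ℝ}

theorem gCost_addE_of_PCost_eq {Q : QS M K N} {u v : Fin M} {k : Fin K} {h : Q.1 u k < N u k}
    (hP : PCost (p v) ((addE Q u k h).1 v) = PCost (p v) (Q.1 v)) :
    gCost wp wf p f (addE Q u k h) v = gCost wp wf p f Q v + 1 := by
  have hsum : ∑ m, ∑ i, ((addE Q u k h).1 m i : ℝ) = ∑ m, ∑ i, (Q.1 m i : ℝ) + 1 := by
    exact_mod_cast sum_sum_addE Q u k h
  rw [gCost, gCost, hsum, hP]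
  ring

variable {𝒜 : Finset (Fin M → Fin K → ℕ)} {ρ : (Fin M → Fin K → ℕ) → ℝ} {V : QS M K N → ℝ}

theorem JCost_addE_self {Q : QS M K N} {u : Fin M} {k : Fin K} {h : Q.1 u k < N u k}
    (hpu : Monotone (p u)) (hT : TriState (addE Q u k h) Q) :
    JCost 𝒜 ρ wp wf p f V (addE Q u k h) u = JCost 𝒜 ρ wp wf p f V Q u + 1 := by
  obtain ⟨j, hkj, hj⟩ := exists_pos_of_triState_addE hT
  have hP := addE_apply_self Q u k h ▸ PCost_update_succ hpu hkj hj
  rw [JCost, JCost, gCost_addE_of_PCost_eq hP,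
    funext (nextQ_congr fun m hm => addE_apply_of_ne Q k h hm)]
  ring

theorem JCost_addE_of_ne {Q : QS M K N} {u v : Fin M} {k : Fin K} {h : Q.1 u k < N u k}
    (hρ : ∀ a ∈ 𝒜, 0 ≤ ρ a) (hV : ∀ Q₁ Q₂, TriState Q₂ Q₁ → V Q₁ ≤ V Q₂)
    (hT : TriState (addE Q u k h) Q) (hvu : v ≠ u) :
    JCost 𝒜 ρ wp wf p f V Q v + 1 ≤ JCost 𝒜 ρ wp wf p f V (addE Q u k h) v := by
  have hP : PCost (p v) ((addE Q u k h).1 v) = PCost (p v) (Q.1 v) := by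
    rw [addE_apply_of_ne Q k h hvu]
  have hfuture :
      ∑ a ∈ 𝒜, ρ a * V (nextQ Q v a) ≤ ∑ a ∈ 𝒜, ρ a * V (nextQ (addE Q u k h) v a) :=
    sum_le_sum fun a ha => mul_le_mul_of_nonneg_left (hV _ _ (hT.nextQ v a)) (hρ a ha)
  rw [JCost, JCost, gCost_addE_of_PCost_eq hP]
  linarith

end State

theorem suboptimal_policy_partial_switch_structure_general
    {M K : ℕ} (N : Fin M → Fin K → ℕ)
    (𝒜 : Finset (Fin M → Fin K → ℕ)) (ρ : (Fin M → Fin K → ℕ) → ℝ)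
    (hρ0 : ∀ a ∈ 𝒜, 0 ≤ ρ a)
    (wp wf : ℝ) (p : Fin M → Fin K → ℝ) (f : Fin M → ℝ)
    (hpmono : ∀ m, Monotone (p m))
    (Vm : Fin M → (Fin K → ℕ) → ℝ)
    (hVm : ∀ m (q₁ q₂ : Fin K → ℕ), TriVec q₂ q₁ → Vm m q₁ ≤ Vm m q₂) :
    ∀ (Q : QS M K N) (u : Fin M) (k : Fin K) (h : Q.1 u k < N u k),
      TriState (addE Q u k h) Q →
      (∀ v : Fin M,
        JCost 𝒜 ρ wp wf p f (fun Q' => ∑ m, Vm m (Q'.1 m)) Q u ≤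
          JCost 𝒜 ρ wp wf p f (fun Q' => ∑ m, Vm m (Q'.1 m)) Q v) →
      ∀ v : Fin M,
        JCost 𝒜 ρ wp wf p f (fun Q' => ∑ m, Vm m (Q'.1 m)) (addE Q u k h) u ≤
          JCost 𝒜 ρ wp wf p f (fun Q' => ∑ m, Vm m (Q'.1 m)) (addE Q u k h) v := by
  intro Q u k h hT hmin v
  rcases eq_or_ne v u with rfl | hvu
  · exact le_rfl
  calc _ = JCost 𝒜 ρ wp wf p f _ Q u + 1 := JCost_addE_self (hpmono u) hT
    _ ≤ JCost 𝒜 ρ wp wf p f _ Q v + 1 := add_le_add_left (hmin v) 1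
    _ ≤ _ := JCost_addE_of_ne hρ0 (sum_le_sum_of_triState hVm) hT hvu

/-- Partial switch structure of the low-complexity suboptimal policy in the nonuniform
case (Theorem 4, part 2): for a separable value function `V(Q) = Σ_m V_m(Q_m)` with
`⊵`-monotone components `V_m`, if content `u` minimizes the state-action cost at `Q` and
`Q u k < N u k` with `Q + E_{u,k} ⊵ Q`, then `u` still minimizes the state-action cost at
`Q + E_{u,k}`. -/
theorem suboptimal_policy_partial_switch_structure
    {M K : ℕ} (hM : 1 ≤ M) (hK : 1 ≤ K) (N : Fin M → Fin K → ℕ)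
    (𝒜 : Finset (Fin M → Fin K → ℕ)) (ρ : (Fin M → Fin K → ℕ) → ℝ)
    (hρ0 : ∀ a ∈ 𝒜, 0 ≤ ρ a) (hρ1 : ∑ a ∈ 𝒜, ρ a = 1)
    (wp wf : ℝ) (p : Fin M → Fin K → ℝ) (f : Fin M → ℝ)
    (hp0 : ∀ m k, 0 ≤ p m k) (hpmono : ∀ m, Monotone (p m))
    (Vm : Fin M → (Fin K → ℕ) → ℝ)
    (hVm : ∀ m (q₁ q₂ : Fin K → ℕ), TriVec q₂ q₁ → Vm m q₁ ≤ Vm m q₂) :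
    ∀ (Q : QS M K N) (u : Fin M) (k : Fin K) (h : Q.1 u k < N u k),
      TriState (addE Q u k h) Q →
      (∀ v : Fin M,
        JCost 𝒜 ρ wp wf p f (fun Q' => ∑ m, Vm m (Q'.1 m)) Q u ≤
          JCost 𝒜 ρ wp wf p f (fun Q' => ∑ m, Vm m (Q'.1 m)) Q v) →
      ∀ v : Fin M,
        JCost 𝒜 ρ wp wf p f (fun Q' => ∑ m, Vm m (Q'.1 m)) (addE Q u k h) u ≤
          JCost 𝒜 ρ wp wf p f (fun Q' => ∑ m, Vm m (Q'.1 m)) (addE Q u k h) v :=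
  suboptimal_policy_partial_switch_structure_general N 𝒜 ρ hρ0 wp wf p f hpmono Vm hVm
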